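/- arXiv:2105.04684 — 2 statements merged into one kernel-verified Lean document; each statement's English description precedes it below -/
import Mathlib

section
/- Suppose a linear system with realization (A, [B₁ B₂], [C₁; C₂], [[D₁₁, D₁₂],[D₂₁, D₂₂]]) has D₁₁ invertible, and let Ĥᵢⱼ(z) = Cᵢ(zI−A)⁻¹Bⱼ + Dᵢⱼ be the blocks of its transfer function at a point z where zI − A and zI − (A − B₁D₁₁⁻¹C₁) are invertible and Ĥ₁₁(z) is invertible. Then the partial inverse realization (A − B₁D₁₁⁻¹C₁, [B₁D₁₁⁻¹, B₂ − B₁D₁₁⁻¹D₁₂], [−D₁₁⁻¹C₁; C₂ − D₂₁D₁₁⁻¹C₁], [[D₁₁⁻¹, −D₁₁⁻¹D₁₂],[D₂₁D₁₁⁻¹, D₂₂ − D₂₁D₁₁⁻¹D₁₂]]) has transfer function blocks equal to [[Ĥ₁₁⁻¹, −Ĥ₁₁⁻¹Ĥ₁₂],[Ĥ₂₁Ĥ₁₁⁻¹, Ĥ₂₂ − Ĥ₂₁Ĥ₁₁⁻¹Ĥ₁₂]] evaluated at z. -/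
/-!
The state matrix `A - B₁ D₁₁⁻¹ C₁` of the partial inverse is a low-rank perturbation of `A`, so the
Woodbury identity writes the resolvent `(zI - (A - B₁ D₁₁⁻¹ C₁))⁻¹` through `(zI - A)⁻¹` and the
inverse of its capacitance matrix `D₁₁ + C₁ (zI - A)⁻¹ B₁`, which is exactly `Ĥ₁₁(z)`. Substituting
this into the `(2,2)` block gives the Schur complement `Ĥ₂₂ - Ĥ₂₁ Ĥ₁₁⁻¹ Ĥ₁₂`; the other three
blocks are the `(2,2)` block of the system augmented by a trivial channel (zero `B₂` or `C₂`, and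
`±1` as the corresponding feedthrough).
-/

open Matrix

section TransferFunction

variable {K : Type*} [CommRing K] {n m p q : Type*} [Fintype n] [DecidableEq n]

noncomputable def transferFunction (A : Matrix n n K) (B : Matrix n q K) (C : Matrix p n K)
    (D : Matrix p q K) (z : K) : Matrix p q K :=
  C * (z • (1 : Matrix n n K) - A)⁻¹ * B + D

theorem mul_inv_mul_mul_eq_transferFunction_mul_sub {r k : Type*} [Fintype r]
    (A : Matrix n n K) (B : Matrix n r K) (C : Matrix p n K) (D : Matrix p r K) (z : K)
    (Y : Matrix r k K) :
    C * ((z • 1 - A)⁻¹ * (B * Y)) = transferFunction A B C D z * Y - D * Y := by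
  rw [transferFunction, Matrix.add_mul, add_sub_cancel_right, Matrix.mul_assoc, Matrix.mul_assoc]

@[simp]
theorem transferFunction_zero_input (A : Matrix n n K) (C : Matrix p n K) (D : Matrix p q K)
    (z : K) : transferFunction A 0 C D z = D := by
  simp [transferFunction]

@[simp]
theorem transferFunction_zero_output (A : Matrix n n K) (B : Matrix n q K) (D : Matrix p q K)
    (z : K) : transferFunction A B 0 D z = D := by
  simp [transferFunction]

variable [Fintype m] [DecidableEq m]
  (A : Matrix n n K) (B₁ : Matrix n m K) (C₁ : Matrix m n K) (D₁₁ : Matrix m m K) (z : K)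

theorem inv_smul_one_sub_sub_mul_inv_mul (hD : IsUnit D₁₁.det)
    (hM : IsUnit (z • (1 : Matrix n n K) - A).det)
    (hH : IsUnit (transferFunction A B₁ C₁ D₁₁ z).det) :
    (z • (1 : Matrix n n K) - (A - B₁ * D₁₁⁻¹ * C₁))⁻¹
      = (z • 1 - A)⁻¹
        - (z • 1 - A)⁻¹ * B₁ * (transferFunction A B₁ C₁ D₁₁ z)⁻¹ * C₁ * (z • 1 - A)⁻¹ := by
  have hH' : transferFunction A B₁ C₁ D₁₁ z = (D₁₁⁻¹)⁻¹ + C₁ * (z • 1 - A)⁻¹ * B₁ := by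
    rw [transferFunction, nonsing_inv_nonsing_inv _ hD, add_comm]
  rw [hH'] at hH
  rw [sub_sub_eq_add_sub, add_sub_right_comm, hH']
  exact add_mul_mul_inv_eq_sub _ _ _ _ ((isUnit_iff_isUnit_det _).2 hM)
    ((isUnit_iff_isUnit_det _).2 (isUnit_nonsing_inv_det _ hD)) ((isUnit_iff_isUnit_det _).2 hH)

theorem sub_mul_inv_mul_mul_inv_smul_one_sub_sub (hD : IsUnit D₁₁.det)
    (hM : IsUnit (z • (1 : Matrix n n K) - A).det)
    (hH : IsUnit (transferFunction A B₁ C₁ D₁₁ z).det) (C₂ : Matrix p n K) (D₂₁ : Matrix p m K) :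
    (C₂ - D₂₁ * D₁₁⁻¹ * C₁) * (z • (1 : Matrix n n K) - (A - B₁ * D₁₁⁻¹ * C₁))⁻¹
      = C₂ * (z • 1 - A)⁻¹
        - transferFunction A B₁ C₂ D₂₁ z * (transferFunction A B₁ C₁ D₁₁ z)⁻¹
          * C₁ * (z • 1 - A)⁻¹ := by
  rw [inv_smul_one_sub_sub_mul_inv_mul A B₁ C₁ D₁₁ z hD hM hH, transferFunction.eq_1 A B₁ C₂]
  simp only [Matrix.sub_mul, Matrix.mul_sub, Matrix.add_mul, Matrix.mul_assoc,
    mul_inv_mul_mul_eq_transferFunction_mul_sub A B₁ C₁ D₁₁ z,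
    mul_nonsing_inv_cancel_left _ _ hH, nonsing_inv_mul_cancel_left _ _ hD]
  abel

theorem transferFunction_partialInverse_eq_sub_mul_inv_mul (hD : IsUnit D₁₁.det)
    (hM : IsUnit (z • (1 : Matrix n n K) - A).det)
    (hH : IsUnit (transferFunction A B₁ C₁ D₁₁ z).det) (B₂ : Matrix n q K) (C₂ : Matrix p n K)
    (D₁₂ : Matrix m q K) (D₂₁ : Matrix p m K) (D₂₂ : Matrix p q K) :
    transferFunction (A - B₁ * D₁₁⁻¹ * C₁) (B₂ - B₁ * D₁₁⁻¹ * D₁₂) (C₂ - D₂₁ * D₁₁⁻¹ * C₁)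
        (D₂₂ - D₂₁ * D₁₁⁻¹ * D₁₂) z
      = transferFunction A B₂ C₂ D₂₂ z
        - transferFunction A B₁ C₂ D₂₁ z * (transferFunction A B₁ C₁ D₁₁ z)⁻¹
          * transferFunction A B₂ C₁ D₁₂ z := by
  rw [transferFunction, sub_mul_inv_mul_mul_inv_smul_one_sub_sub A B₁ C₁ D₁₁ z hD hM hH,
    transferFunction.eq_1 A B₂ C₂, transferFunction.eq_1 A B₂ C₁]
  simp only [Matrix.sub_mul, Matrix.mul_sub, Matrix.mul_add, Matrix.mul_assoc,
    mul_inv_mul_mul_eq_transferFunction_mul_sub A B₁ C₁ D₁₁ z,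
    mul_inv_mul_mul_eq_transferFunction_mul_sub A B₁ C₂ D₂₁ z,
    nonsing_inv_mul_cancel_left _ _ hH, mul_nonsing_inv_cancel_left _ _ hD]
  abel

theorem transferFunction_partialInverse_inv (hD : IsUnit D₁₁.det)
    (hM : IsUnit (z • (1 : Matrix n n K) - A).det)
    (hH : IsUnit (transferFunction A B₁ C₁ D₁₁ z).det) :
    transferFunction (A - B₁ * D₁₁⁻¹ * C₁) (B₁ * D₁₁⁻¹) (-(D₁₁⁻¹ * C₁)) D₁₁⁻¹ z
      = (transferFunction A B₁ C₁ D₁₁ z)⁻¹ := by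
  simpa only [zero_sub, Matrix.one_mul, Matrix.mul_neg, Matrix.mul_one, neg_neg,
    transferFunction_zero_input, transferFunction_zero_output] using
    transferFunction_partialInverse_eq_sub_mul_inv_mul A B₁ C₁ D₁₁ z hD hM hH
      (0 : Matrix n m K) (0 : Matrix m n K) (-1) 1 0

theorem transferFunction_partialInverse_neg_inv_mul (hD : IsUnit D₁₁.det)
    (hM : IsUnit (z • (1 : Matrix n n K) - A).det)
    (hH : IsUnit (transferFunction A B₁ C₁ D₁₁ z).det) (B₂ : Matrix n q K) (D₁₂ : Matrix m q K) :
    transferFunction (A - B₁ * D₁₁⁻¹ * C₁) (B₂ - B₁ * D₁₁⁻¹ * D₁₂) (-(D₁₁⁻¹ * C₁))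
        (-(D₁₁⁻¹ * D₁₂)) z
      = -((transferFunction A B₁ C₁ D₁₁ z)⁻¹ * transferFunction A B₂ C₁ D₁₂ z) := by
  simpa only [zero_sub, Matrix.one_mul, transferFunction_zero_output] using
    transferFunction_partialInverse_eq_sub_mul_inv_mul A B₁ C₁ D₁₁ z hD hM hH
      B₂ (0 : Matrix m n K) D₁₂ 1 0

theorem transferFunction_partialInverse_mul_inv (hD : IsUnit D₁₁.det)
    (hM : IsUnit (z • (1 : Matrix n n K) - A).det)
    (hH : IsUnit (transferFunction A B₁ C₁ D₁₁ z).det) (C₂ : Matrix p n K) (D₂₁ : Matrix p m K) :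
    transferFunction (A - B₁ * D₁₁⁻¹ * C₁) (B₁ * D₁₁⁻¹) (C₂ - D₂₁ * D₁₁⁻¹ * C₁) (D₂₁ * D₁₁⁻¹) z
      = transferFunction A B₁ C₂ D₂₁ z * (transferFunction A B₁ C₁ D₁₁ z)⁻¹ := by
  simpa only [zero_sub, Matrix.mul_neg, Matrix.mul_one, neg_neg, transferFunction_zero_input]
    using transferFunction_partialInverse_eq_sub_mul_inv_mul A B₁ C₁ D₁₁ z hD hM hH
      (0 : Matrix n m K) C₂ (-1) D₂₁ 0

end TransferFunction

theorem partial_inverse_realization_transfer_function_general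
    {K : Type*} [Field K] {n m₁ m₂ p₂ : ℕ}
    (A : Matrix (Fin n) (Fin n) K)
    (B₁ : Matrix (Fin n) (Fin m₁) K) (B₂ : Matrix (Fin n) (Fin m₂) K)
    (C₁ : Matrix (Fin m₁) (Fin n) K) (C₂ : Matrix (Fin p₂) (Fin n) K)
    (D₁₁ : Matrix (Fin m₁) (Fin m₁) K) (D₁₂ : Matrix (Fin m₁) (Fin m₂) K)
    (D₂₁ : Matrix (Fin p₂) (Fin m₁) K) (D₂₂ : Matrix (Fin p₂) (Fin m₂) K)
    (hD : IsUnit D₁₁.det) (z : K)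
    (h1 : IsUnit (z • (1 : Matrix (Fin n) (Fin n) K) - A).det)
    (H₁₁ : Matrix (Fin m₁) (Fin m₁) K) (H₁₂ : Matrix (Fin m₁) (Fin m₂) K)
    (H₂₁ : Matrix (Fin p₂) (Fin m₁) K) (H₂₂ : Matrix (Fin p₂) (Fin m₂) K)
    (hH11 : H₁₁ = C₁ * (z • (1 : Matrix (Fin n) (Fin n) K) - A)⁻¹ * B₁ + D₁₁)
    (hH12 : H₁₂ = C₁ * (z • (1 : Matrix (Fin n) (Fin n) K) - A)⁻¹ * B₂ + D₁₂)
    (hH21 : H₂₁ = C₂ * (z • (1 : Matrix (Fin n) (Fin n) K) - A)⁻¹ * B₁ + D₂₁)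
    (hH22 : H₂₂ = C₂ * (z • (1 : Matrix (Fin n) (Fin n) K) - A)⁻¹ * B₂ + D₂₂)
    (hHinv : IsUnit H₁₁.det) :
    (-(D₁₁⁻¹ * C₁)) * (z • (1 : Matrix (Fin n) (Fin n) K) - (A - B₁ * D₁₁⁻¹ * C₁))⁻¹ * (B₁ * D₁₁⁻¹)
        + D₁₁⁻¹ = H₁₁⁻¹
    ∧ (-(D₁₁⁻¹ * C₁)) * (z • (1 : Matrix (Fin n) (Fin n) K) - (A - B₁ * D₁₁⁻¹ * C₁))⁻¹
        * (B₂ - B₁ * D₁₁⁻¹ * D₁₂) + (-(D₁₁⁻¹ * D₁₂)) = -(H₁₁⁻¹ * H₁₂)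
    ∧ (C₂ - D₂₁ * D₁₁⁻¹ * C₁) * (z • (1 : Matrix (Fin n) (Fin n) K) - (A - B₁ * D₁₁⁻¹ * C₁))⁻¹
        * (B₁ * D₁₁⁻¹) + D₂₁ * D₁₁⁻¹ = H₂₁ * H₁₁⁻¹
    ∧ (C₂ - D₂₁ * D₁₁⁻¹ * C₁) * (z • (1 : Matrix (Fin n) (Fin n) K) - (A - B₁ * D₁₁⁻¹ * C₁))⁻¹
        * (B₂ - B₁ * D₁₁⁻¹ * D₁₂) + (D₂₂ - D₂₁ * D₁₁⁻¹ * D₁₂)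
        = H₂₂ - H₂₁ * H₁₁⁻¹ * H₁₂ := by
  subst hH11 hH12 hH21 hH22
  exact ⟨transferFunction_partialInverse_inv A B₁ C₁ D₁₁ z hD h1 hHinv,
    transferFunction_partialInverse_neg_inv_mul A B₁ C₁ D₁₁ z hD h1 hHinv B₂ D₁₂,
    transferFunction_partialInverse_mul_inv A B₁ C₁ D₁₁ z hD h1 hHinv C₂ D₂₁,
    transferFunction_partialInverse_eq_sub_mul_inv_mul A B₁ C₁ D₁₁ z hD h1 hHinv B₂ C₂ D₁₂ D₂₁ D₂₂⟩

theorem partial_inverse_realization_transfer_function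
    {K : Type*} [Field K] {n m₁ m₂ p₂ : ℕ}
    (A : Matrix (Fin n) (Fin n) K)
    (B₁ : Matrix (Fin n) (Fin m₁) K) (B₂ : Matrix (Fin n) (Fin m₂) K)
    (C₁ : Matrix (Fin m₁) (Fin n) K) (C₂ : Matrix (Fin p₂) (Fin n) K)
    (D₁₁ : Matrix (Fin m₁) (Fin m₁) K) (D₁₂ : Matrix (Fin m₁) (Fin m₂) K)
    (D₂₁ : Matrix (Fin p₂) (Fin m₁) K) (D₂₂ : Matrix (Fin p₂) (Fin m₂) K)
    (hD : IsUnit D₁₁.det) (z : K)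
    (h1 : IsUnit (z • (1 : Matrix (Fin n) (Fin n) K) - A).det)
    (h2 : IsUnit (z • (1 : Matrix (Fin n) (Fin n) K) - (A - B₁ * D₁₁⁻¹ * C₁)).det)
    (H₁₁ : Matrix (Fin m₁) (Fin m₁) K) (H₁₂ : Matrix (Fin m₁) (Fin m₂) K)
    (H₂₁ : Matrix (Fin p₂) (Fin m₁) K) (H₂₂ : Matrix (Fin p₂) (Fin m₂) K)
    (hH11 : H₁₁ = C₁ * (z • (1 : Matrix (Fin n) (Fin n) K) - A)⁻¹ * B₁ + D₁₁)
    (hH12 : H₁₂ = C₁ * (z • (1 : Matrix (Fin n) (Fin n) K) - A)⁻¹ * B₂ + D₁₂)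
    (hH21 : H₂₁ = C₂ * (z • (1 : Matrix (Fin n) (Fin n) K) - A)⁻¹ * B₁ + D₂₁)
    (hH22 : H₂₂ = C₂ * (z • (1 : Matrix (Fin n) (Fin n) K) - A)⁻¹ * B₂ + D₂₂)
    (hHinv : IsUnit H₁₁.det) :
    (-(D₁₁⁻¹ * C₁)) * (z • (1 : Matrix (Fin n) (Fin n) K) - (A - B₁ * D₁₁⁻¹ * C₁))⁻¹ * (B₁ * D₁₁⁻¹)
        + D₁₁⁻¹ = H₁₁⁻¹
    ∧ (-(D₁₁⁻¹ * C₁)) * (z • (1 : Matrix (Fin n) (Fin n) K) - (A - B₁ * D₁₁⁻¹ * C₁))⁻¹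
        * (B₂ - B₁ * D₁₁⁻¹ * D₁₂) + (-(D₁₁⁻¹ * D₁₂)) = -(H₁₁⁻¹ * H₁₂)
    ∧ (C₂ - D₂₁ * D₁₁⁻¹ * C₁) * (z • (1 : Matrix (Fin n) (Fin n) K) - (A - B₁ * D₁₁⁻¹ * C₁))⁻¹
        * (B₁ * D₁₁⁻¹) + D₂₁ * D₁₁⁻¹ = H₂₁ * H₁₁⁻¹
    ∧ (C₂ - D₂₁ * D₁₁⁻¹ * C₁) * (z • (1 : Matrix (Fin n) (Fin n) K) - (A - B₁ * D₁₁⁻¹ * C₁))⁻¹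
        * (B₂ - B₁ * D₁₁⁻¹ * D₁₂) + (D₂₂ - D₂₁ * D₁₁⁻¹ * D₁₂)
        = H₂₂ - H₂₁ * H₁₁⁻¹ * H₁₂ :=
  partial_inverse_realization_transfer_function_general A B₁ B₂ C₁ C₂ D₁₁ D₁₂ D₂₁ D₂₂ hD z h1 H₁₁
    H₁₂ H₂₁ H₂₂ hH11 hH12 hH21 hH22 hHinv
end

section
/- The transfer function of the triple momentum realization (A,B,C,D) = ([[1+β,−β],[1,0]], [−α;0], [1+η,−η], 0) equals −α((η+1)z − η)/((z−1)(z−β)) for all z with (z−1)(z−β) ≠ 0. Consequently, it equals −1/(5(z−1)) (the gradient-method transfer function with stepsize 1/5) for all such z if and only if 5α(η+1) = 1 and 5αη = β. -/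
/-!
Since `zI - A = !![z - (1 + β), β; -1, z]` has determinant `(z - 1)(z - β)`, the adjugate formula
gives the transfer function directly. Clearing denominators, matching it with `-1/(5(z - 1))` means
that the affine functions `5α((η + 1)z - η)` and `z - β` agree off `{1, β}`, hence at two distinct
points, hence coefficientwise.
-/

open Matrix

theorem Matrix.inv_fin_two_of {K : Type*} [Field K] (a b c d : K) :
    !![a, b; c, d]⁻¹ = (a * d - b * c)⁻¹ • !![d, -b; -c, a] := by
  rw [inv_def, adjugate_fin_two_of, det_fin_two_of, Ring.inverse_eq_inv']

theorem eq_and_eq_of_affine_eq_at_two_points {K : Type*} [Field K] {a b c d x y : K}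
    (hxy : x ≠ y) (hx : a * x - b = c * x - d) (hy : a * y - b = c * y - d) :
    a = c ∧ b = d := by
  have hac : a = c := by
    have h : (a - c) * (x - y) = 0 := by linear_combination hx - hy
    exact sub_eq_zero.1 ((mul_eq_zero.1 h).resolve_right (sub_ne_zero.2 hxy))
  subst hac
  exact ⟨rfl, sub_right_injective hx⟩

theorem tripleMomentum_resolvent (β z : ℝ) :
    z • (1 : Matrix (Fin 2) (Fin 2) ℝ) - !![1 + β, -β; 1, 0] = !![z - (1 + β), β; -1, z] := by
  ext i j
  fin_cases i <;> fin_cases j <;> simp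

-- No hypothesis on `z` is needed: at the poles both sides are `0`, since `0⁻¹ = 0`.
theorem tripleMomentum_transferFunction (α β η z : ℝ) :
    !![1 + η, -η] * (z • (1 : Matrix (Fin 2) (Fin 2) ℝ) - !![1 + β, -β; 1, 0])⁻¹ * !![-α; 0]
      = !![-α * ((η + 1) * z - η) / ((z - 1) * (z - β))] := by
  have hdet : (z - (1 + β)) * z - β * -1 = (z - 1) * (z - β) := by ring
  rw [tripleMomentum_resolvent, inv_fin_two_of, hdet, Matrix.mul_smul, Matrix.smul_mul]
  simp only [neg_neg, cons_mul, vecMul_cons, head_cons, smul_cons, smul_eq_mul, mul_neg,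
    smul_empty, tail_cons, neg_smul, mul_one, neg_cons, neg_empty, empty_vecMul, add_zero,
    add_cons, empty_add_empty, empty_mul, Equiv.symm_apply_apply, mul_zero, smul_of,
    EmbeddingLike.apply_eq_iff_eq, vecCons_inj, and_true]
  ring

theorem tripleMomentum_eq_gradient_iff {α β η z : ℝ} (hz : (z - 1) * (z - β) ≠ 0) :
    -α * ((η + 1) * z - η) / ((z - 1) * (z - β)) = -1 / (5 * (z - 1))
      ↔ 5 * α * (η + 1) * z - 5 * α * η = 1 * z - β := by
  have h1 : z - 1 ≠ 0 := left_ne_zero_of_mul hz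
  rw [div_eq_div_iff hz (mul_ne_zero (by norm_num) h1)]
  constructor
  · intro h
    apply mul_left_cancel₀ h1
    linear_combination -h
  · intro h
    linear_combination (-(z - 1)) * h

theorem tripleMomentum_matches_gradient_iff (α β η : ℝ) :
    (∀ z : ℝ, (z - 1) * (z - β) ≠ 0 →
      -α * ((η + 1) * z - η) / ((z - 1) * (z - β)) = -1 / (5 * (z - 1)))
      ↔ (5 * α * (η + 1) = 1 ∧ 5 * α * η = β) := by
  refine ⟨fun h => ?_, fun ⟨hslope, hshift⟩ z hz => ?_⟩
  · have hoff : ∀ z, max 1 β < z → (z - 1) * (z - β) ≠ 0 := fun z hlt =>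
      mul_ne_zero (sub_ne_zero.2 (max_lt_iff.1 hlt).1.ne') (sub_ne_zero.2 (max_lt_iff.1 hlt).2.ne')
    set z₀ := max 1 β + 1
    have h₀ := (tripleMomentum_eq_gradient_iff (hoff z₀ (by linarith))).1
      (h z₀ (hoff z₀ (by linarith)))
    have h₁ := (tripleMomentum_eq_gradient_iff (hoff (z₀ + 1) (by linarith))).1
      (h (z₀ + 1) (hoff (z₀ + 1) (by linarith)))
    exact eq_and_eq_of_affine_eq_at_two_points (by linarith) h₀ h₁
  · exact (tripleMomentum_eq_gradient_iff hz).2 (by rw [hslope, hshift])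

theorem triple_momentum_transfer_function_and_matching
    (α β η : ℝ) :
    (∀ z : ℝ, (z - 1) * (z - β) ≠ 0 →
      !![1 + η, -η] * (z • (1 : Matrix (Fin 2) (Fin 2) ℝ) - !![1 + β, -β; 1, 0])⁻¹ * !![-α; 0]
        = !![-α * ((η + 1) * z - η) / ((z - 1) * (z - β))])
    ∧ ((∀ z : ℝ, (z - 1) * (z - β) ≠ 0 →
        !![1 + η, -η] * (z • (1 : Matrix (Fin 2) (Fin 2) ℝ) - !![1 + β, -β; 1, 0])⁻¹ * !![-α; 0]
          = !![-1 / (5 * (z - 1))])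
      ↔ (5 * α * (η + 1) = 1 ∧ 5 * α * η = β)) := by
  refine ⟨fun z _ => tripleMomentum_transferFunction α β η z, ?_⟩
  simp only [tripleMomentum_transferFunction, EmbeddingLike.apply_eq_iff_eq, vecCons_inj, and_true]
  exact tripleMomentum_matches_gradient_iff α β η
end
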